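/- Let t = (1−(N−1)(D−1))/N. Every vector p = (p_1,…,p_{N^K}) with p_m = t for all m ∈ {1,…,N}, 0 ≤ p_m ≤ t for all m ∈ {N+1,…,N^K}, and Σ_{m=N+1}^{N^K} p_m = (N−1)(D−1), is a feasible distribution for the symmetric TSC scheme and satisfies max_{m ∈ {1,…,N^K}} p_m = t; hence every such p attains the minimum of max_m p_m over feasible distributions. -/

import Mathlib

open Finset Real

/-- Download cost of option `m` (0-indexed: options `1,…,N` of the paper are `m < N`)
in the symmetric TSC scheme with `N` databases and `K` messages. -/
noncomputable def tscCost (N m : ℕ) : ℝ := if m < N then (N : ℝ) - 1 else (N : ℝ)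

/-- `p` is a feasible query distribution for the symmetric TSC scheme with expected
normalized download cost `D`. -/
def TSCFeasible (N K : ℕ) (D : ℝ) (p : ℕ → ℝ) : Prop :=
  (∀ m ∈ Finset.range (N ^ K), 0 ≤ p m) ∧
  (∑ m ∈ Finset.range (N ^ K), p m = 1) ∧
  (1 / ((N : ℝ) - 1)) * (∑ m ∈ Finset.range (N ^ K), p m * tscCost N m) = D

/-- The optimal distribution `p*` for the symmetric TSC scheme. -/
noncomputable def tscOpt (N K : ℕ) (D : ℝ) (m : ℕ) : ℝ :=
  if m < N then (1 - ((N : ℝ) - 1) * (D - 1)) / N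
  else ((N : ℝ) - 1) * (D - 1) / ((N : ℝ) ^ K - (N : ℝ))

/-- Download cost of option `m` (0-indexed) in the alternative PIR scheme with
message length `L`. -/
noncomputable def altCost (N L m : ℕ) : ℝ := if m < N then (L : ℝ) else (L : ℝ) + 1

/-- `p` is a feasible query distribution for the alternative PIR scheme
(`M = N (L+1)^(K-1)` options) with expected normalized download cost `D`. -/
def AltFeasible (N K L : ℕ) (D : ℝ) (p : ℕ → ℝ) : Prop :=
  (∀ m ∈ Finset.range (N * (L + 1) ^ (K - 1)), 0 ≤ p m) ∧
  (∑ m ∈ Finset.range (N * (L + 1) ^ (K - 1)), p m = 1) ∧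
  (1 / (L : ℝ)) * (∑ m ∈ Finset.range (N * (L + 1) ^ (K - 1)), p m * altCost N L m) = D

/-- The optimal distribution `q*` for the alternative PIR scheme. -/
noncomputable def altOpt (N K L : ℕ) (D : ℝ) (m : ℕ) : ℝ :=
  if m < N then (1 - (L : ℝ) * (D - 1)) / N
  else (L : ℝ) * (D - 1) / ((N : ℝ) * ((L : ℝ) + 1) ^ (K - 1) - (N : ℝ))

/-- Rényi divergence of order `α` (`0 < α`, `α ≠ 1`) of a distribution `p` on `M`
options from the uniform distribution on those options (natural logarithm). -/
noncomputable def renyiDiv (M : ℕ) (α : ℝ) (p : ℕ → ℝ) : ℝ :=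
  (1 / (α - 1)) * Real.log ((M : ℝ) ^ (α - 1) * ∑ m ∈ Finset.range M, p m ^ α)

/-- Kullback–Leibler divergence of a distribution `p` on `M` options from the uniform
distribution on those options (natural logarithm, with `0 · log 0 = 0`). -/
noncomputable def klDivUnif (M : ℕ) (p : ℕ → ℝ) : ℝ :=
  ∑ m ∈ Finset.range M, p m * Real.log ((M : ℝ) * p m)

/-- The maximum of `p` over the `M` options. -/
noncomputable def maxOver (M : ℕ) (hM : M ≠ 0) (p : ℕ → ℝ) : ℝ :=
  (Finset.range M).sup' (Finset.nonempty_range_iff.mpr hM) p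

/-!
The two linear constraints of feasibility (total mass `1`, normalized cost `D`) determine the
mass `1 - (N-1)(D-1) = N t` that any feasible distribution puts on the `N` cheap options, so
one of them has probability at least `t`. The given `p` puts exactly `t` on each cheap option
and at most `t` elsewhere, so its maximum is `t`.
-/

theorem sum_range_mul_tscCost {N M : ℕ} (hNM : N ≤ M) (r : ℕ → ℝ) :
    ∑ m ∈ range M, r m * tscCost N m =
      ((N : ℝ) - 1) * ∑ m ∈ range N, r m + N * ∑ m ∈ Ico N M, r m := by
  rw [← sum_range_add_sum_Ico _ hNM, mul_sum, mul_sum]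
  congr 1
  · refine sum_congr rfl fun m hm => ?_
    rw [tscCost, if_pos (mem_range.mp hm), mul_comm]
  · refine sum_congr rfl fun m hm => ?_
    rw [tscCost, if_neg (not_lt.mpr (mem_Ico.mp hm).1), mul_comm]

theorem tscFeasible_iff {N K : ℕ} (hN : 1 < N) (hK : K ≠ 0) (D : ℝ) (p : ℕ → ℝ) :
    TSCFeasible N K D p ↔
      (∀ m ∈ range (N ^ K), 0 ≤ p m) ∧
      ∑ m ∈ range N, p m = 1 - ((N : ℝ) - 1) * (D - 1) ∧
      ∑ m ∈ Ico N (N ^ K), p m = ((N : ℝ) - 1) * (D - 1) := by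
  have hNK : N ≤ N ^ K := Nat.le_self_pow hK N
  have hN1 : (N : ℝ) - 1 ≠ 0 := sub_ne_zero.mpr (by exact_mod_cast hN.ne')
  rw [TSCFeasible, sum_range_mul_tscCost hNK, ← sum_range_add_sum_Ico _ hNK]
  refine and_congr_right fun _ => ?_
  set a := ∑ m ∈ range N, p m
  set b := ∑ m ∈ Ico N (N ^ K), p m
  rw [one_div_mul_eq_div, div_eq_iff hN1]
  constructor
  · rintro ⟨hmass, hcost⟩
    exact ⟨by linear_combination (N : ℝ) * hmass - hcost,
      by linear_combination hcost - ((N : ℝ) - 1) * hmass⟩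
  · rintro ⟨ha, hb⟩
    exact ⟨by linear_combination ha + hb,
      by linear_combination ((N : ℝ) - 1) * ha + (N : ℝ) * hb⟩

theorem le_maxOver {M : ℕ} (hM : M ≠ 0) (p : ℕ → ℝ) {m : ℕ} (hm : m < M) :
    p m ≤ maxOver M hM p :=
  le_sup' p (mem_range.mpr hm)

theorem maxOver_le_iff {M : ℕ} (hM : M ≠ 0) (p : ℕ → ℝ) (c : ℝ) :
    maxOver M hM p ≤ c ↔ ∀ m ∈ range M, p m ≤ c :=
  sup'_le_iff _ _

theorem le_maxOver_of_le_sum_range {M n : ℕ} (hM : M ≠ 0) (hn : n ≠ 0) (hnM : n ≤ M)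
    (p : ℕ → ℝ) {c : ℝ} (h : n * c ≤ ∑ m ∈ range n, p m) : c ≤ maxOver M hM p := by
  have h' : ∑ _m ∈ range n, c ≤ ∑ m ∈ range n, p m := by
    rwa [sum_const, card_range, nsmul_eq_mul]
  obtain ⟨m, hm, hcm⟩ := exists_le_of_sum_le (nonempty_range_iff.mpr hn) h'
  exact hcm.trans (le_maxOver hM p ((mem_range.mp hm).trans_le hnM))

/-- with `t = (1-(N-1)(D-1))/N`, every vector `p` equal to `t` on the first
`N` options, between `0` and `t` on the remaining options, and with tail sum
`(N-1)(D-1)`, is feasible for the symmetric TSC scheme, has `max_m pₘ = t`, and attains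
the minimum of `max_m pₘ` over feasible distributions. -/
theorem tsc_max_attained (N K : ℕ) (hN : 2 ≤ N) (hK : 2 ≤ K) (D : ℝ)
    (p : ℕ → ℝ)
    (hhead : ∀ m ∈ Finset.range N, p m = (1 - ((N : ℝ) - 1) * (D - 1)) / N)
    (htail : ∀ m ∈ Finset.Ico N (N ^ K),
      0 ≤ p m ∧ p m ≤ (1 - ((N : ℝ) - 1) * (D - 1)) / N)
    (hsum : ∑ m ∈ Finset.Ico N (N ^ K), p m = ((N : ℝ) - 1) * (D - 1)) :
    TSCFeasible N K D p ∧
    maxOver (N ^ K) (pow_ne_zero K (show N ≠ 0 by omega)) p =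
      (1 - ((N : ℝ) - 1) * (D - 1)) / N ∧
    ∀ q : ℕ → ℝ, TSCFeasible N K D q →
      maxOver (N ^ K) (pow_ne_zero K (show N ≠ 0 by omega)) p ≤
        maxOver (N ^ K) (pow_ne_zero K (show N ≠ 0 by omega)) q := by
  set t := (1 - ((N : ℝ) - 1) * (D - 1)) / N
  have hNK : N < N ^ K := by
    simpa using Nat.pow_lt_pow_right (a := N) (by omega) (by omega : 1 < K)
  have hNt : (N : ℝ) * t = 1 - ((N : ℝ) - 1) * (D - 1) := mul_div_cancel₀ _ (by positivity)
  have hbound : ∀ m ∈ range (N ^ K), 0 ≤ p m ∧ p m ≤ t := by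
    -- `t ≥ 0` since the tail option `N` (which exists as `K ≥ 2`) has `0 ≤ p N ≤ t`.
    have ht : 0 ≤ t :=
      have hN_tail := htail N (mem_Ico.mpr ⟨le_rfl, hNK⟩)
      hN_tail.1.trans hN_tail.2
    intro m hm
    rcases lt_or_ge m N with hmN | hmN
    · rw [hhead m (mem_range.mpr hmN)]; exact ⟨ht, le_rfl⟩
    · exact htail m (mem_Ico.mpr ⟨hmN, mem_range.mp hm⟩)
  have hheadsum : ∑ m ∈ range N, p m = 1 - ((N : ℝ) - 1) * (D - 1) := by
    rw [sum_congr rfl hhead, sum_const, card_range, nsmul_eq_mul, hNt]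
  have hmax : maxOver (N ^ K) (pow_ne_zero K (show N ≠ 0 by omega)) p = t :=
    le_antisymm ((maxOver_le_iff _ p t).mpr fun m hm => (hbound m hm).2)
      ((hhead 0 (mem_range.mpr (by omega))).ge.trans (le_maxOver _ p (by omega)))
  refine ⟨(tscFeasible_iff (by omega) (by omega) D p).mpr
    ⟨fun m hm => (hbound m hm).1, hheadsum, hsum⟩, hmax, fun q hq => ?_⟩
  obtain ⟨-, hqhead, -⟩ := (tscFeasible_iff (by omega) (by omega) D q).mp hq
  exact hmax ▸ le_maxOver_of_le_sum_range _ (by omega) hNK.le q (hNt.trans hqhead.symm).le
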